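/- In the associative algebra A_0 generated over F_2[V_0, V_{N+1}] by idempotents I_1,...,I_N and elements U_1,...,U_N, s_1,...,s_N with the given multiplication rules, the element U_4 := Σ_{i=1}^N s_{ii} (where s_{ii} = s_i s_{i+1} ··· s_N s_1 ··· s_{i-1}, indices mod N) is central: U_4 commutes with every generator I_j, U_j, s_j. -/

import Mathlib

/-- The ground ring 𝔽₂[V₀, V_{N+1}], realized as polynomials in two variables over ℤ/2. -/
abbrev GroundRing := MvPolynomial (Fin 2) (ZMod 2)

/-- Generators of the associative algebra `A₀`: idempotents `I i`, and elements
`U i`, `s i`, for `i` ranging over `Fin N` (indices are taken mod `N`). -/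
inductive AGen (N : ℕ) : Type
  | I : Fin N → AGen N
  | U : Fin N → AGen N
  | s : Fin N → AGen N
deriving DecidableEq

variable (N : ℕ) [NeZero N]

open FreeAlgebra in
/-- The defining relations of `A₀` from the paper:
`I_i I_j = δ_{ij} I_i`; `I_j U_i = U_i I_j = δ_{ij} U_i`; `I_j s_i = δ_{ij} s_i`;
`s_i I_j = s_i` iff `j = i+1 (mod N)`; `U_i U_j = 0` for `i ≠ j`;
`U_i s_j = s_j U_i = 0`; `s_i s_j = 0` unless `j = i+1 (mod N)`. -/
inductive ARel : FreeAlgebra GroundRing (AGen N) → FreeAlgebra GroundRing (AGen N) → Prop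
  | II (i j : Fin N) : ARel (ι GroundRing (AGen.I i) * ι GroundRing (AGen.I j))
      (if i = j then ι GroundRing (AGen.I i) else 0)
  | IU (i j : Fin N) : ARel (ι GroundRing (AGen.I j) * ι GroundRing (AGen.U i))
      (if i = j then ι GroundRing (AGen.U i) else 0)
  | UI (i j : Fin N) : ARel (ι GroundRing (AGen.U i) * ι GroundRing (AGen.I j))
      (if i = j then ι GroundRing (AGen.U i) else 0)
  | Is (i j : Fin N) : ARel (ι GroundRing (AGen.I j) * ι GroundRing (AGen.s i))
      (if j = i then ι GroundRing (AGen.s i) else 0)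
  | sI (i j : Fin N) : ARel (ι GroundRing (AGen.s i) * ι GroundRing (AGen.I j))
      (if j = i + 1 then ι GroundRing (AGen.s i) else 0)
  | UU (i j : Fin N) : i ≠ j → ARel (ι GroundRing (AGen.U i) * ι GroundRing (AGen.U j)) 0
  | Us (i j : Fin N) : ARel (ι GroundRing (AGen.U i) * ι GroundRing (AGen.s j)) 0
  | sU (i j : Fin N) : ARel (ι GroundRing (AGen.s j) * ι GroundRing (AGen.U i)) 0
  | ss (i j : Fin N) : j ≠ i + 1 → ARel (ι GroundRing (AGen.s i) * ι GroundRing (AGen.s j)) 0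

/-- The associative algebra `A₀`, presented by the above generators and relations. -/
abbrev A0 := RingQuot (ARel N)

/-- The idempotent generator `I i` of `A₀`. -/
noncomputable def aI (i : Fin N) : A0 N :=
  RingQuot.mkAlgHom GroundRing (ARel N) (FreeAlgebra.ι GroundRing (AGen.I i))

/-- The generator `U i` of `A₀`. -/
noncomputable def aU (i : Fin N) : A0 N :=
  RingQuot.mkAlgHom GroundRing (ARel N) (FreeAlgebra.ι GroundRing (AGen.U i))

/-- The generator `s i` of `A₀`. -/
noncomputable def aS (i : Fin N) : A0 N :=
  RingQuot.mkAlgHom GroundRing (ARel N) (FreeAlgebra.ι GroundRing (AGen.s i))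

open Fin.NatCast in
/-- `s_{ii} = s_i s_{i+1} ⋯ s_{i-1}`, the full cyclic product of the `N` generators
`s_j` starting at index `i` (indices mod `N`). -/
noncomputable def scyc (i : Fin N) : A0 N :=
  ((List.range N).map (fun k => aS N (i + (k : Fin N)))).prod

/-! A cyclic product `s_{ii}` is a closed path at vertex `i` of the cyclic quiver, so
`I_j s_{ii} = s_{ii} I_j = δ_{ij} s_{ii}`, and `U_j` kills it on both sides. Against `s_j`, the
only surviving terms are `s_{jj} s_j` and `s_j s_{j+1,j+1}`, both equal to the path
`s_j s_{j+1} ⋯ s_j` of length `N + 1`. -/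

section

variable {N : ℕ} [NeZero N]

theorem aI_mul_aS (i j : Fin N) : aI N j * aS N i = if j = i then aS N i else 0 := by
  rw [aI, aS, ← map_mul, RingQuot.mkAlgHom_rel _ (ARel.Is i j), apply_ite (RingQuot.mkAlgHom _ _),
    map_zero]

theorem aS_mul_aI (i j : Fin N) : aS N i * aI N j = if j = i + 1 then aS N i else 0 := by
  rw [aI, aS, ← map_mul, RingQuot.mkAlgHom_rel _ (ARel.sI i j), apply_ite (RingQuot.mkAlgHom _ _),
    map_zero]

theorem aU_mul_aS (i j : Fin N) : aU N i * aS N j = 0 := by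
  rw [aU, aS, ← map_mul, RingQuot.mkAlgHom_rel _ (ARel.Us i j), map_zero]

theorem aS_mul_aU (i j : Fin N) : aS N j * aU N i = 0 := by
  rw [aU, aS, ← map_mul, RingQuot.mkAlgHom_rel _ (ARel.sU i j), map_zero]

theorem aS_mul_aS_of_ne (i j : Fin N) (h : j ≠ i + 1) : aS N i * aS N j = 0 := by
  rw [aS, aS, ← map_mul, RingQuot.mkAlgHom_rel _ (ARel.ss i j h), map_zero]

open Fin.NatCast

noncomputable def sChain (i : Fin N) (n : ℕ) : A0 N :=
  ((List.range n).map fun k : ℕ => aS N (i + k)).prod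

theorem sChain_succ (i : Fin N) (n : ℕ) : sChain i (n + 1) = sChain i n * aS N (i + n) :=
  List.prod_range_succ _ n

theorem sChain_succ' (i : Fin N) (n : ℕ) : sChain i (n + 1) = aS N i * sChain (i + 1) n := by
  simp only [sChain, List.prod_range_succ', Nat.cast_zero, add_zero, Nat.cast_succ,
    add_assoc, add_comm (1 : Fin N)]

variable {n : ℕ} (i j : Fin N)

theorem aI_mul_sChain (hn : n ≠ 0) : aI N j * sChain i n = if j = i then sChain i n else 0 := by
  obtain ⟨m, rfl⟩ := Nat.exists_eq_succ_of_ne_zero hn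
  rw [sChain_succ', ← mul_assoc, aI_mul_aS]
  split_ifs <;> simp

theorem sChain_mul_aI (hn : n ≠ 0) :
    sChain i n * aI N j = if j = i + n then sChain i n else 0 := by
  obtain ⟨m, rfl⟩ := Nat.exists_eq_succ_of_ne_zero hn
  rw [sChain_succ, mul_assoc, aS_mul_aI, Nat.cast_succ, ← add_assoc]
  split_ifs <;> simp

theorem aU_mul_sChain (hn : n ≠ 0) : aU N j * sChain i n = 0 := by
  obtain ⟨m, rfl⟩ := Nat.exists_eq_succ_of_ne_zero hn
  rw [sChain_succ', ← mul_assoc, aU_mul_aS, zero_mul]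

theorem sChain_mul_aU (hn : n ≠ 0) : sChain i n * aU N j = 0 := by
  obtain ⟨m, rfl⟩ := Nat.exists_eq_succ_of_ne_zero hn
  rw [sChain_succ, mul_assoc, aS_mul_aU, mul_zero]

theorem aS_mul_sChain (hn : n ≠ 0) :
    aS N j * sChain i n = if i = j + 1 then sChain j (n + 1) else 0 := by
  split_ifs with h
  · rw [h, sChain_succ']
  · obtain ⟨m, rfl⟩ := Nat.exists_eq_succ_of_ne_zero hn
    rw [sChain_succ', ← mul_assoc, aS_mul_aS_of_ne _ _ h, zero_mul]

theorem sChain_mul_aS (hn : n ≠ 0) :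
    sChain i n * aS N j = if j = i + n then sChain i (n + 1) else 0 := by
  split_ifs with h
  · rw [h, sChain_succ]
  · obtain ⟨m, rfl⟩ := Nat.exists_eq_succ_of_ne_zero hn
    rw [sChain_succ, mul_assoc, aS_mul_aS_of_ne _ _ (by rwa [add_assoc, ← Nat.cast_succ]),
      mul_zero]

-- `scyc` elaborates with `List.range N` coerced to `List (Fin N)` through the list monad.
theorem scyc_eq_sChain : scyc N i = sChain i N := by
  simp only [scyc, sChain, bind_pure_comp, List.map_eq_map, List.map_map, Function.comp_def]

theorem aI_mul_scyc : aI N j * scyc N i = if j = i then scyc N i else 0 := by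
  rw [scyc_eq_sChain, aI_mul_sChain i j (NeZero.ne N)]

theorem scyc_mul_aI : scyc N i * aI N j = if j = i then scyc N i else 0 := by
  rw [scyc_eq_sChain, sChain_mul_aI i j (NeZero.ne N), Fin.natCast_self, add_zero]

theorem aU_mul_scyc : aU N j * scyc N i = 0 := by
  rw [scyc_eq_sChain, aU_mul_sChain i j (NeZero.ne N)]

theorem scyc_mul_aU : scyc N i * aU N j = 0 := by
  rw [scyc_eq_sChain, sChain_mul_aU i j (NeZero.ne N)]

theorem aS_mul_scyc : aS N j * scyc N i = if i = j + 1 then sChain j (N + 1) else 0 := by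
  rw [scyc_eq_sChain, aS_mul_sChain i j (NeZero.ne N)]

theorem scyc_mul_aS : scyc N i * aS N j = if j = i then sChain j (N + 1) else 0 := by
  rw [scyc_eq_sChain, sChain_mul_aS i j (NeZero.ne N), Fin.natCast_self, add_zero]
  split_ifs with h <;> simp only [h]

end

theorem U4_is_central (j : Fin N) :
    (∑ i : Fin N, scyc N i) * aI N j = aI N j * (∑ i : Fin N, scyc N i) ∧
    (∑ i : Fin N, scyc N i) * aU N j = aU N j * (∑ i : Fin N, scyc N i) ∧
    (∑ i : Fin N, scyc N i) * aS N j = aS N j * (∑ i : Fin N, scyc N i) := by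
  simp only [Finset.sum_mul, Finset.mul_sum, scyc_mul_aI, aI_mul_scyc, scyc_mul_aU, aU_mul_scyc,
    scyc_mul_aS, aS_mul_scyc, Finset.sum_ite_eq, Finset.sum_ite_eq', Finset.mem_univ, if_true,
    and_self]
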